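/- arXiv:1210.0367 — 3 statements merged into one kernel-verified Lean document; each statement's English description precedes it below -/
import Mathlib

section
/- Let a, b, c > 0 with c = a·b and suppose a, b, c ∈ [π⁻¹, π]. Then (a² + a⁻² ) + (b² + b⁻²) + (c² + c⁻²) ≤ 2(1 + π² + π⁻²), and in particular 3 + (a²+a⁻²) + (b²+b⁻²) + (c²+c⁻²) < 25. -/
/-!
With `f t = t + t⁻¹`, the three squares `a², b²` and `(c²)⁻¹` have product `1`, lie in
`[π⁻², π²]`, and `f` takes the same value at `c²` and `(c²)⁻¹`. The identity
`f x + f y + (x - 1) (y - 1) + (x⁻¹ - 1) (y⁻¹ - 1) = f (x y) + 2` shows `f x + f y ≤ f (x y) + 2`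
whenever `x` and `y` lie on the same side of `1`, and of three numbers two always do. Writing
`u v w = 1` with `u, v` on the same side gives `f u + f v + f w ≤ 2 f w + 2 ≤ 2 f p + 2` on
`[p⁻¹, p]`, attained at `(p, p⁻¹, 1)`.
-/

open Real Set

section AddInv

variable {p t x y u v w : ℝ}

lemma pos_of_mem_Icc_inv (hp : 0 < p) (ht : t ∈ Icc p⁻¹ p) : 0 < t :=
  (inv_pos.2 hp).trans_le ht.1

lemma inv_mem_Icc_inv (hp : 0 < p) (ht : t ∈ Icc p⁻¹ p) : t⁻¹ ∈ Icc p⁻¹ p :=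
  ⟨inv_anti₀ (pos_of_mem_Icc_inv hp ht) ht.2, inv_le_of_inv_le₀ hp ht.1⟩

lemma pow_mem_Icc_inv (hp : 0 < p) (ht : t ∈ Icc p⁻¹ p) (n : ℕ) :
    t ^ n ∈ Icc (p ^ n)⁻¹ (p ^ n) := by
  rw [← inv_pow]
  exact ⟨pow_le_pow_left₀ (inv_pos.2 hp).le ht.1 n,
    pow_le_pow_left₀ (pos_of_mem_Icc_inv hp ht).le ht.2 n⟩

lemma add_inv_le_of_mem_Icc_inv (hp : 0 < p) (ht : t ∈ Icc p⁻¹ p) : t + t⁻¹ ≤ p + p⁻¹ := by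
  have ht0 := pos_of_mem_Icc_inv hp ht
  have hpt : 1 ≤ p * t := by rw [← inv_le_iff_one_le_mul₀' hp]; exact ht.1
  have key : p + p⁻¹ - (t + t⁻¹) = (p - t) * (p * t - 1) / (p * t) := by
    field_simp
    ring
  have : 0 ≤ (p - t) * (p * t - 1) / (p * t) :=
    div_nonneg (mul_nonneg (sub_nonneg.2 ht.2) (sub_nonneg.2 hpt)) (by positivity)
  linarith

lemma add_inv_add_add_inv_le_of_mul_sub_one_nonneg (hx : 0 < x) (hy : 0 < y)
    (h : 0 ≤ (x - 1) * (y - 1)) : x + x⁻¹ + (y + y⁻¹) ≤ x * y + (x * y)⁻¹ + 2 := by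
  have key : x * y + (x * y)⁻¹ + 2 - (x + x⁻¹ + (y + y⁻¹))
      = (x - 1) * (y - 1) + (x⁻¹ - 1) * (y⁻¹ - 1) := by
    field_simp
    ring
  have : 0 ≤ (x⁻¹ - 1) * (y⁻¹ - 1) := by
    rw [show (x⁻¹ - 1) * (y⁻¹ - 1) = (x - 1) * (y - 1) / (x * y) by field_simp; ring]
    positivity
  linarith

lemma mul_nonneg_or_mul_nonneg_or_mul_nonneg (α β γ : ℝ) :
    0 ≤ α * β ∨ 0 ≤ β * γ ∨ 0 ≤ γ * α := by
  by_contra! h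
  nlinarith [mul_self_nonneg (α * β * γ), mul_pos_of_neg_of_neg h.1 h.2.1]

lemma add_inv_sum_le_of_mul_sub_one_nonneg (hp : 0 < p) (hu : u ∈ Icc p⁻¹ p)
    (hv : v ∈ Icc p⁻¹ p) (hw : w ∈ Icc p⁻¹ p) (huvw : u * v * w = 1)
    (h : 0 ≤ (u - 1) * (v - 1)) :
    u + u⁻¹ + (v + v⁻¹) + (w + w⁻¹) ≤ 2 * (1 + p + p⁻¹) := by
  have huv : u * v = w⁻¹ := eq_inv_of_mul_eq_one_left huvw
  have hpair := add_inv_add_add_inv_le_of_mul_sub_one_nonneg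
    (pos_of_mem_Icc_inv hp hu) (pos_of_mem_Icc_inv hp hv) h
  rw [huv, inv_inv] at hpair
  linarith [add_inv_le_of_mem_Icc_inv hp hw]

lemma add_inv_sum_le_of_mul_eq_one (hp : 0 < p) (hu : u ∈ Icc p⁻¹ p)
    (hv : v ∈ Icc p⁻¹ p) (hw : w ∈ Icc p⁻¹ p) (huvw : u * v * w = 1) :
    u + u⁻¹ + (v + v⁻¹) + (w + w⁻¹) ≤ 2 * (1 + p + p⁻¹) := by
  rcases mul_nonneg_or_mul_nonneg_or_mul_nonneg (u - 1) (v - 1) (w - 1) with h | h | h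
  · exact add_inv_sum_le_of_mul_sub_one_nonneg hp hu hv hw huvw h
  · have := add_inv_sum_le_of_mul_sub_one_nonneg hp hv hw hu (by linear_combination huvw) h
    linarith
  · have := add_inv_sum_le_of_mul_sub_one_nonneg hp hw hu hv (by linear_combination huvw) h
    linarith

end AddInv

lemma two_mul_one_add_sq_pi_add_inv_lt : 2 * (1 + π ^ 2 + (π ^ 2)⁻¹) < 22 := by
  have hsq : π ^ 2 < 9.87 := by nlinarith [pi_lt_d4, pi_pos]
  have hinv : (π ^ 2)⁻¹ < 1 / 9 := by
    rw [inv_lt_comm₀ (by positivity) (by norm_num)]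
    nlinarith [pi_gt_three]
  linarith

theorem stmt_1_general (a b c : ℝ)
    (hab : c = a * b)
    (ha' : a ∈ Set.Icc π⁻¹ π) (hb' : b ∈ Set.Icc π⁻¹ π) (hc' : c ∈ Set.Icc π⁻¹ π) :
    (a ^ 2 + (a ^ 2)⁻¹) + (b ^ 2 + (b ^ 2)⁻¹) + (c ^ 2 + (c ^ 2)⁻¹)
      ≤ 2 * (1 + π ^ 2 + (π ^ 2)⁻¹) ∧
    3 + ((a ^ 2 + (a ^ 2)⁻¹) + (b ^ 2 + (b ^ 2)⁻¹) + (c ^ 2 + (c ^ 2)⁻¹)) < 25 := by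
  have hp : 0 < π ^ 2 := pow_pos pi_pos 2
  have hc2 := pow_mem_Icc_inv pi_pos hc' 2
  have hprod : a ^ 2 * b ^ 2 * (c ^ 2)⁻¹ = 1 := by
    rw [show a ^ 2 * b ^ 2 = c ^ 2 by rw [hab]; ring]
    exact mul_inv_cancel₀ (pos_of_mem_Icc_inv hp hc2).ne'
  have key := add_inv_sum_le_of_mul_eq_one hp (pow_mem_Icc_inv pi_pos ha' 2)
    (pow_mem_Icc_inv pi_pos hb' 2) (inv_mem_Icc_inv hp hc2) hprod
  rw [inv_inv] at key
  exact ⟨by linarith, by linarith [two_mul_one_add_sq_pi_add_inv_lt]⟩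

/-- Estimate (27): the key numerical inequality in the H¹-stability proof. -/
theorem stmt_1 (a b c : ℝ) (ha : 0 < a) (hb : 0 < b) (hc : 0 < c)
    (hab : c = a * b)
    (ha' : a ∈ Set.Icc π⁻¹ π) (hb' : b ∈ Set.Icc π⁻¹ π) (hc' : c ∈ Set.Icc π⁻¹ π) :
    (a ^ 2 + (a ^ 2)⁻¹) + (b ^ 2 + (b ^ 2)⁻¹) + (c ^ 2 + (c ^ 2)⁻¹)
      ≤ 2 * (1 + π ^ 2 + (π ^ 2)⁻¹) ∧
    3 + ((a ^ 2 + (a ^ 2)⁻¹) + (b ^ 2 + (b ^ 2)⁻¹) + (c ^ 2 + (c ^ 2)⁻¹)) < 25 :=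
  stmt_1_general a b c hab ha' hb' hc'
end

section
/- Let d₁, d₂, d₃ > 0 satisfy dᵢ/dⱼ ≤ π for all i, j ∈ {1,2,3}. Then the symmetric 3×3 matrix B with Bᵢᵢ = 4 and Bᵢⱼ = dᵢ/dⱼ + dⱼ/dᵢ for i ≠ j is positive definite. -/
/-!
Write `B = 2 • 1 + d d⁻¹ᵀ + d⁻¹ dᵀ`, so that `xᵀ B x = 2 ‖x‖² + 2 ⟨d, x⟩ ⟨d⁻¹, x⟩`. Cauchy–Schwarz
applied to `⟨‖d⁻¹‖ d - ‖d‖ d⁻¹, x⟩` bounds the product from below, and with `⟨d, d⁻¹⟩ = 3` this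
gives `xᵀ B x ≥ (5 - ‖d‖ ‖d⁻¹‖) ‖x‖²`. Finally `‖d‖² ‖d⁻¹‖² = ∑ᵢⱼ dᵢ² / dⱼ²`, and for sorted
squares `X₀ ≤ X₁ ≤ X₂` this sum only grows when `X₁` is moved to an endpoint, so it is at most
`5 + 2 (π² + π⁻²) < 25`.
-/

open Real Matrix

lemma add_inv_le_add_inv_of_one_le {r P : ℝ} (hr : 1 ≤ r) (hrP : r ≤ P) :
    r + r⁻¹ ≤ P + P⁻¹ := by
  have hP : 0 < P := by linarith
  have hdiff : r⁻¹ - P⁻¹ = (P - r) / (r * P) := by field_simp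
  have hle : (P - r) / (r * P) ≤ P - r := div_le_self (by linarith) (by nlinarith)
  linarith

lemma div_add_div_add_div_add_div_le {x y z : ℝ} (hz : 0 < z) (hzy : z ≤ y) (hyx : y ≤ x) :
    x / y + y / x + (y / z + z / y) ≤ x / z + z / x + 2 := by
  have hy : 0 < y := hz.trans_le hzy
  have hx : 0 < x := hy.trans_le hyx
  have key : x / z + z / x + 2 - (x / y + y / x + (y / z + z / y))
      = (x - y) * (y - z) * (x + z) / (x * y * z) := by
    field_simp
    ring
  have hnonneg : 0 ≤ (x - y) * (y - z) * (x + z) / (x * y * z) :=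
    div_nonneg (mul_nonneg (mul_nonneg (by linarith) (by linarith)) (by linarith)) (by positivity)
  linarith

lemma sum_sum_div_le_of_monotone {X : Fin 3 → ℝ} (hX : ∀ i, 0 < X i) (hmono : Monotone X)
    {P : ℝ} (hP : X 2 / X 0 ≤ P) : ∑ i, ∑ j, X i / X j ≤ 5 + 2 * (P + P⁻¹) := by
  have h01 : X 0 ≤ X 1 := hmono (by decide)
  have h12 : X 1 ≤ X 2 := hmono (by decide)
  have hmiddle := div_add_div_add_div_add_div_le (hX 0) h01 h12
  have hends := add_inv_le_add_inv_of_one_le ((one_le_div (hX 0)).2 (h01.trans h12)) hP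
  rw [inv_div] at hends
  simp only [Fin.sum_univ_three, div_self (hX _).ne']
  linarith

theorem sum_sum_div_le (X : Fin 3 → ℝ) (hX : ∀ i, 0 < X i) {P : ℝ}
    (hP : ∀ i j, X i / X j ≤ P) : ∑ i, ∑ j, X i / X j ≤ 5 + 2 * (P + P⁻¹) := by
  set σ := Tuple.sort X
  have hsum : ∑ i, ∑ j, X i / X j = ∑ i, ∑ j, (X ∘ σ) i / (X ∘ σ) j := by
    rw [← Equiv.sum_comp σ]
    exact Finset.sum_congr rfl fun i _ => (Equiv.sum_comp σ _).symm
  rw [hsum]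
  exact sum_sum_div_le_of_monotone (fun i => hX _) (Tuple.monotone_sort X) (hP _ _)

lemma sq_pi_add_inv_sq_pi_lt_ten : π ^ 2 + (π ^ 2)⁻¹ < 10 := by
  have hlo : 9.8 < π ^ 2 := by nlinarith [pi_gt_d4]
  have hhi : π ^ 2 < 9.87 := by nlinarith [pi_lt_d4, pi_gt_d4]
  have hinv : (π ^ 2)⁻¹ < 9.8⁻¹ := inv_strictAnti₀ (by norm_num) hlo
  norm_num at hinv ⊢
  linarith

lemma two_mul_inner_mul_inner_ge {E : Type*} [NormedAddCommGroup E] [InnerProductSpace ℝ E]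
    (u v x : E) :
    (inner ℝ u v - ‖u‖ * ‖v‖) * ‖x‖ ^ 2 ≤ 2 * (inner ℝ u x * inner ℝ v x) := by
  rcases eq_or_ne u 0 with rfl | hu
  · simp
  rcases eq_or_ne v 0 with rfl | hv
  · simp
  set a := ‖v‖
  set b := ‖u‖
  have ha : 0 < a := norm_pos_iff.2 hv
  have hb : 0 < b := norm_pos_iff.2 hu
  -- `a • u` and `b • v` have the same norm, which makes the Cauchy–Schwarz bound sharp.
  have hw : ‖a • u - b • v‖ ^ 2 = 2 * (a * b) * (a * b - inner ℝ u v) := by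
    rw [norm_sub_sq_real, norm_smul, norm_smul, real_inner_smul_left, real_inner_smul_right]
    simp only [Real.norm_eq_abs, abs_of_pos ha, abs_of_pos hb]
    ring
  have hcs : inner ℝ (a • u - b • v) x ^ 2 ≤ ‖a • u - b • v‖ ^ 2 * ‖x‖ ^ 2 := by
    rw [← mul_pow]
    exact sq_le_sq' (neg_le_of_abs_le (abs_real_inner_le_norm _ _)) (real_inner_le_norm _ _)
  rw [inner_sub_left, real_inner_smul_left, real_inner_smul_left, hw] at hcs
  nlinarith [mul_pos ha hb, sq_nonneg (a * inner ℝ u x + b * inner ℝ v x)]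

theorem posDef_smul_one_add_vecMulVec_add_vecMulVec {n : Type*} [Fintype n] [DecidableEq n]
    (c : ℝ) (u v : n → ℝ) (h : ‖WithLp.toLp 2 u‖ * ‖WithLp.toLp 2 v‖ < c + u ⬝ᵥ v) :
    (c • 1 + vecMulVec u v + vecMulVec v u).PosDef := by
  rw [posDef_iff_dotProduct_mulVec]
  refine ⟨by simp [IsHermitian, transpose_vecMulVec, add_right_comm], fun x hx => ?_⟩
  have hnorm : ‖WithLp.toLp 2 x‖ ^ 2 = x ⬝ᵥ x := by
    rw [← real_inner_self_eq_norm_sq, EuclideanSpace.inner_toLp_toLp, star_trivial]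
  have hquad : star x ⬝ᵥ ((c • 1 + vecMulVec u v + vecMulVec v u) *ᵥ x)
      = c * ‖WithLp.toLp 2 x‖ ^ 2 + 2 * (u ⬝ᵥ x * (v ⬝ᵥ x)) := by
    simp only [add_mulVec, smul_mulVec, one_mulVec, vecMulVec_mulVec, star_trivial,
      dotProduct_add, dotProduct_smul, MulOpposite.smul_eq_mul_unop, MulOpposite.unop_op,
      smul_eq_mul, hnorm, dotProduct_comm x u, dotProduct_comm x v]
    ring
  have hx : 0 < ‖WithLp.toLp 2 x‖ ^ 2 := pow_pos (norm_pos_iff.2 (by simpa using hx)) 2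
  have hcs := two_mul_inner_mul_inner_ge (WithLp.toLp 2 u) (WithLp.toLp 2 v) (WithLp.toLp 2 x)
  simp only [EuclideanSpace.inner_toLp_toLp, star_trivial, dotProduct_comm x,
    dotProduct_comm v u] at hcs
  rw [hquad]
  nlinarith [mul_pos (sub_pos.2 h) hx]

lemma sq_norm_toLp_mul_norm_toLp {n : Type*} [Fintype n] (u v : n → ℝ) :
    (‖WithLp.toLp 2 u‖ * ‖WithLp.toLp 2 v‖) ^ 2 = ∑ i, ∑ j, u i ^ 2 * v j ^ 2 := by
  simp only [mul_pow, EuclideanSpace.real_norm_sq_eq, Finset.sum_mul_sum]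

/-- The symmetrized scaled mass matrix is positive definite when the ratios
are bounded by π. -/
theorem stmt_2 (d : Fin 3 → ℝ) (hd : ∀ i, 0 < d i)
    (hratio : ∀ i j, d i / d j ≤ π) :
    (Matrix.of fun i j : Fin 3 =>
      if i = j then (4 : ℝ) else d i / d j + d j / d i).PosDef := by
  have hB : (Matrix.of fun i j : Fin 3 => if i = j then (4 : ℝ) else d i / d j + d j / d i)
      = (2 : ℝ) • 1 + vecMulVec d d⁻¹ + vecMulVec d⁻¹ d := by
    ext i j
    by_cases hij : i = j
    · subst hij
      simp [vecMulVec_apply, (hd i).ne']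
      norm_num
    · simp [vecMulVec_apply, hij, div_eq_mul_inv, mul_comm]
  have hdot : d ⬝ᵥ d⁻¹ = 3 := by simp [dotProduct, (hd _).ne']
  have hsum : ∑ i, ∑ j, (d ^ 2) i / (d ^ 2) j < 25 := by
    have := sum_sum_div_le (d ^ 2) (fun i => pow_pos (hd i) 2) (P := π ^ 2) fun i j => by
      simpa only [Pi.pow_apply, div_pow] using
        pow_le_pow_left₀ (div_pos (hd i) (hd j)).le (hratio i j) 2
    linarith [sq_pi_add_inv_sq_pi_lt_ten]
  have hnorm : ‖WithLp.toLp 2 d‖ * ‖WithLp.toLp 2 d⁻¹‖ < 5 := by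
    refine (abs_lt_of_sq_lt_sq' ?_ (by norm_num)).2
    simpa [sq_norm_toLp_mul_norm_toLp, div_eq_mul_inv] using hsum.trans_eq (by norm_num)
  rw [hB]
  exact posDef_smul_one_add_vecMulVec_add_vecMulVec 2 d d⁻¹ (by linarith)
end

section
/- Let B be the symmetric 3×3 matrix with Bᵢᵢ = 4 and Bᵢⱼ = bᵢ/bⱼ + bⱼ/bᵢ for i ≠ j, where b₁, b₂, b₃ > 0. Then the minimal eigenvalue of B is 5 − (Σ_{j,k=1}^{3} bⱼ²/bₖ²)^{1/2}. -/
/-!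
Writing `B = 2 • 1 + b (b⁻¹)ᵀ + b⁻¹ bᵀ`, the rank-two part has eigenvalues `3 ± √T` with
`T = ∑ⱼ ∑ₖ bⱼ² / bₖ²`, so the characteristic polynomial of `B` is `(t - 2) ((t - 5)² - T)`.
By Cauchy–Schwarz `T ≥ 9`, hence `5 - √T ≤ 2` is the least of the three roots, and the roots of
the characteristic polynomial of a symmetric matrix are exactly its eigenvalues.
-/

open Polynomial

theorem card_sq_le_sum_sum_sq_div_sq {ι : Type*} [Fintype ι] (b : ι → ℝ) (hb : ∀ i, b i ≠ 0) :
    (Fintype.card ι : ℝ) ^ 2 ≤ ∑ j, ∑ k, b j ^ 2 / b k ^ 2 := by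
  have hcs := Finset.sum_mul_sq_le_sq_mul_sq Finset.univ b (fun i => (b i)⁻¹)
  simp only [mul_inv_cancel₀ (hb _), Finset.sum_const, Finset.card_univ, nsmul_eq_mul, mul_one,
    inv_pow] at hcs
  simpa only [Finset.sum_mul_sum, div_eq_mul_inv] using hcs

namespace Matrix.IsHermitian

variable {n : Type*} [Fintype n] [DecidableEq n] {A : Matrix n n ℝ}

theorem isRoot_charpoly_iff (hA : A.IsHermitian) {y : ℝ} :
    A.charpoly.IsRoot y ↔ ∃ i, hA.eigenvalues i = y := by
  simp only [IsRoot.def, hA.charpoly_eq, eval_prod, eval_sub, eval_X, eval_C,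
    Finset.prod_eq_zero_iff, Finset.mem_univ, true_and, sub_eq_zero, RCLike.ofReal_real_eq_id, id]
  exact exists_congr fun _ => eq_comm

theorem iInf_eigenvalues_eq_of_isLeast (hA : A.IsHermitian) {x : ℝ}
    (hx : IsLeast {y | A.charpoly.IsRoot y} x) : ⨅ i, hA.eigenvalues i = x := by
  obtain ⟨i₀, hi₀⟩ := hA.isRoot_charpoly_iff.mp hx.1
  have : Nonempty n := ⟨i₀⟩
  refine le_antisymm (hi₀ ▸ ciInf_le (Finite.bddBelow_range _) i₀) (le_ciInf fun i => ?_)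
  exact hx.2 (hA.isRoot_charpoly_iff.mpr ⟨i, rfl⟩)

end Matrix.IsHermitian

noncomputable def bpsMatrix (b : Fin 3 → ℝ) : Matrix (Fin 3) (Fin 3) ℝ :=
  Matrix.of fun i j => if i = j then 4 else b i / b j + b j / b i

theorem det_scalar_sub_bpsMatrix (b : Fin 3 → ℝ) (hb : ∀ i, b i ≠ 0) (t : ℝ) :
    (Matrix.scalar (Fin 3) t - bpsMatrix b).det
      = (t - 2) * ((t - 5) ^ 2 - ∑ j, ∑ k, b j ^ 2 / b k ^ 2) := by
  have := hb 0; have := hb 1; have := hb 2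
  simp only [bpsMatrix, Matrix.det_fin_three, Matrix.scalar_apply, Matrix.sub_apply,
    Matrix.of_apply, Matrix.diagonal_apply_eq, Matrix.diagonal_apply_ne, ne_eq, Fin.reduceEq,
    not_false_eq_true, ↓reduceIte, Fin.sum_univ_three]
  field_simp
  ring

theorem charpoly_bpsMatrix (b : Fin 3 → ℝ) (hb : ∀ i, b i ≠ 0) :
    (bpsMatrix b).charpoly = (X - C 2) * (X - C (5 - √(∑ j, ∑ k, b j ^ 2 / b k ^ 2)))
      * (X - C (5 + √(∑ j, ∑ k, b j ^ 2 / b k ^ 2))) := by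
  have hT : 0 ≤ ∑ j, ∑ k, b j ^ 2 / b k ^ 2 := by positivity
  refine Polynomial.funext fun t => ?_
  simp only [Matrix.eval_charpoly, det_scalar_sub_bpsMatrix b hb, eval_mul, eval_sub, eval_X,
    eval_C]
  linear_combination (t - 2) * Real.sq_sqrt hT

/-- The minimal eigenvalue formula of Bramble–Pasciak–Steinbach. -/
theorem stmt_3 (b : Fin 3 → ℝ) (hb : ∀ i, 0 < b i)
    (B : Matrix (Fin 3) (Fin 3) ℝ)
    (hB : B = Matrix.of fun i j : Fin 3 =>
      if i = j then (4 : ℝ) else b i / b j + b j / b i)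
    (hHerm : B.IsHermitian) :
    (⨅ i, hHerm.eigenvalues i)
      = 5 - Real.sqrt (∑ j : Fin 3, ∑ k : Fin 3, (b j) ^ 2 / (b k) ^ 2) := by
  have hb₀ : ∀ i, b i ≠ 0 := fun i => (hb i).ne'
  have hs : 3 ≤ √(∑ j : Fin 3, ∑ k : Fin 3, b j ^ 2 / b k ^ 2) :=
    Real.le_sqrt_of_sq_le (by simpa using card_sq_le_sum_sum_sq_div_sq b hb₀)
  obtain rfl : B = bpsMatrix b := hB
  refine hHerm.iInf_eigenvalues_eq_of_isLeast ⟨?_, fun y hy => ?_⟩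
  · simp [charpoly_bpsMatrix b hb₀]
  · simp only [Set.mem_ofPred_eq, charpoly_bpsMatrix b hb₀, IsRoot.def, eval_mul, eval_sub,
      eval_X, eval_C, mul_eq_zero, sub_eq_zero] at hy
    rcases hy with (rfl | rfl) | rfl <;> linarith
end
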